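/- arXiv:1611.06674 — 2 statements merged into one kernel-verified Lean document; each statement's English description precedes it below -/
import Mathlib

section
/- For any positive integer k, with the inner product ⟨x,y⟩ = (w₀/2π)∫_{-π/w₀}^{π/w₀} x(t)y(t) dt and ψ₁(t) = (3√5/(2π²)) w₀² t² − √5/2, one has ⟨sin(k w₀ t + α), ψ₁⟩ = (3√5/π²) sin(α) (−1)^k / k². -/
open Real

/-- The inner product ⟨x,y⟩ = (w₀/(2π))∫_{-π/w₀}^{π/w₀} x(t)y(t) dt. -/
noncomputable def ip (w₀ : ℝ) (x y : ℝ → ℝ) : ℝ :=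
  (w₀ / (2 * π)) * ∫ t in (-(π / w₀))..(π / w₀), x t * y t
theorem inner_sin_harmonic_psi1 (w₀ : ℝ) (hw₀ : 0 < w₀) (α : ℝ) (k : ℕ) (hk : 0 < k) :
    ip w₀ (fun t => Real.sin ((k : ℝ) * w₀ * t + α))
      (fun t => (3 * Real.sqrt 5 / (2 * π ^ 2)) * w₀ ^ 2 * t ^ 2 - Real.sqrt 5 / 2) =
      (3 * Real.sqrt 5 / π ^ 2) * Real.sin α * (-1 : ℝ) ^ k / (k : ℝ) ^ 2 := by
  have hπ : (0:ℝ) < π := Real.pi_pos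
  have hk' : (0:ℝ) < (k:ℝ) := by exact_mod_cast hk
  set c : ℝ := (k:ℝ) * w₀ with hc
  have hc0 : c ≠ 0 := by positivity
  set a : ℝ := 3 * Real.sqrt 5 / (2 * π ^ 2) * w₀ ^ 2 with ha
  set b : ℝ := Real.sqrt 5 / 2 with hb
  set F : ℝ → ℝ := fun t => -((a * t ^ 2 - b) * Real.cos (c * t + α)) / c
      + 2 * a * t * Real.sin (c * t + α) / c ^ 2 + 2 * a * Real.cos (c * t + α) / c ^ 3 with hF
  have hderiv : ∀ t : ℝ, HasDerivAt F (Real.sin (c * t + α) * (a * t ^ 2 - b)) t := by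
    intro t
    have h1 : HasDerivAt (fun t : ℝ => c * t + α) c t := by
      simpa using ((hasDerivAt_id t).const_mul c).add_const α
    have hs := (Real.hasDerivAt_sin (c * t + α)).comp t h1
    have hcos := (Real.hasDerivAt_cos (c * t + α)).comp t h1
    have hq : HasDerivAt (fun t : ℝ => a * t ^ 2 - b) (a * (2 * t)) t := by
      simpa using ((hasDerivAt_pow 2 t).const_mul a).sub_const b
    have := (((hq.mul hcos).neg.div_const c).add
        (((hasDerivAt_id t).const_mul (2*a)).mul hs |>.div_const (c^2))).add
        ((hcos.const_mul (2*a)).div_const (c^3))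
    convert this using 1
    · rfl
    · rfl
    · rfl
    simp only [Function.comp_apply, id]
    field_simp
    ring
  have hint : (∫ t in (-(π / w₀))..(π / w₀),
      Real.sin (c * t + α) * (a * t ^ 2 - b))
      = F (π / w₀) - F (-(π / w₀)) :=
    intervalIntegral.integral_eq_sub_of_hasDerivAt (fun t _ => hderiv t)
      (Continuous.intervalIntegrable (by continuity) _ _)
  unfold ip
  rw [hint]
  have hw : w₀ ≠ 0 := ne_of_gt hw₀
  have harg : c * (π / w₀) = (k:ℝ) * π := by field_simp [hc]; ring
  have harg' : c * (-(π / w₀)) = -((k:ℝ) * π) := by field_simp [hc]; ring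
  have hsin : Real.sin ((k:ℝ) * π) = 0 := Real.sin_nat_mul_pi k
  have hcos : Real.cos ((k:ℝ) * π) = (-1:ℝ)^k := by
    simpa using Real.cos_nat_mul_pi_sub 0 k
  have e1 : Real.sin (c * (π / w₀) + α) = (-1:ℝ)^k * Real.sin α := by
    rw [harg, Real.sin_add, hsin, hcos]; ring
  have e2 : Real.cos (c * (π / w₀) + α) = (-1:ℝ)^k * Real.cos α := by
    rw [harg, Real.cos_add, hsin, hcos]; ring
  have e3 : Real.sin (c * (-(π / w₀)) + α) = (-1:ℝ)^k * Real.sin α := by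
    rw [harg', Real.sin_add, Real.sin_neg, Real.cos_neg, hsin, hcos]; ring
  have e4 : Real.cos (c * (-(π / w₀)) + α) = (-1:ℝ)^k * Real.cos α := by
    rw [harg', Real.cos_add, Real.sin_neg, Real.cos_neg, hsin, hcos]; ring
  simp only [hF, e1, e2, e3, e4]
  rw [ha, hc]
  field_simp
  ring
end

section
/- Let f, n be elements of a real inner product space with ⟨f, n⟩ = 0, ‖f‖ > 0, ‖n‖ = σ > 0, and let ψ be a unit vector. Set ρ = ‖f‖/σ, a* = ⟨f/‖f‖, ψ⟩, x = f + n, and â = ⟨x/‖x‖, ψ⟩. Then (ρ a* − 1)/√(ρ² + 1) ≤ â ≤ (ρ a* + 1)/√(ρ² + 1). In particular the coefficient a* is scaled by ρ/√(ρ²+1) < 1 and perturbed by at most 1/√(ρ²+1). -/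
open scoped RealInnerProductSpace

theorem noisy_coefficient_bounds {E : Type*} [NormedAddCommGroup E] [InnerProductSpace ℝ E]
    (f n ψ : E) (σ ρ a' x' : ℝ)
    (horth : ⟪f, n⟫ = 0) (hf : 0 < ‖f‖) (hσ : ‖n‖ = σ) (hσpos : 0 < σ)
    (hψ : ‖ψ‖ = 1)
    (hρ : ρ = ‖f‖ / σ)
    (ha : a' = ⟪(‖f‖⁻¹ : ℝ) • f, ψ⟫)
    (hx : x' = ⟪(‖f + n‖⁻¹ : ℝ) • (f + n), ψ⟫) :
    (ρ * a' - 1) / Real.sqrt (ρ ^ 2 + 1) ≤ x' ∧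
    x' ≤ (ρ * a' + 1) / Real.sqrt (ρ ^ 2 + 1) ∧
    ρ / Real.sqrt (ρ ^ 2 + 1) < 1 := by
  have hρpos : 0 < ρ := by rw [hρ]; positivity
  set s := Real.sqrt (ρ ^ 2 + 1) with hs
  have hspos : 0 < s := Real.sqrt_pos.mpr (by positivity)
  have hssq : s ^ 2 = ρ ^ 2 + 1 := Real.sq_sqrt (by positivity)
  have hρs : ρ < s := by
    nlinarith [hspos, hssq]
  have hfρ : ‖f‖ = ρ * σ := by rw [hρ, div_mul_cancel₀ _ hσpos.ne']
  -- norm of f + n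
  have hN2 : ‖f + n‖ ^ 2 = (σ * s) ^ 2 := by
    rw [← real_inner_self_eq_norm_sq]
    have h2 : ⟪n, f⟫ = 0 := by rw [real_inner_comm]; exact horth
    simp only [inner_add_add_self, horth, h2, real_inner_self_eq_norm_sq]
    rw [hfρ, hσ]
    nlinarith [hssq]
  have hN : ‖f + n‖ = σ * s := by
    have h1 : (0:ℝ) ≤ ‖f + n‖ := norm_nonneg _
    have h2 : (0:ℝ) ≤ σ * s := by positivity
    nlinarith
  have hnψ : |⟪n, ψ⟫| ≤ σ := by
    calc |⟪n, ψ⟫| ≤ ‖n‖ * ‖ψ‖ := abs_real_inner_le_norm n ψ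
    _ = σ := by rw [hσ, hψ, mul_one]
  have hxval : x' = (ρ * a' + ⟪n, ψ⟫ / σ) / s := by
    rw [hx, real_inner_smul_left, inner_add_left, hN]
    rw [ha, real_inner_smul_left]
    have hf0 : ‖f‖ ≠ 0 := ne_of_gt hf
    rw [hfρ] at hf0 ⊢
    field_simp
  have habs := abs_le.mp hnψ
  constructor
  · rw [hxval]
    apply div_le_div_of_nonneg_right _ hspos.le
    have : -1 ≤ ⟪n, ψ⟫ / σ := by
      rw [le_div_iff₀ hσpos]; linarith
    linarith
  constructor
  · rw [hxval]
    apply div_le_div_of_nonneg_right _ hspos.le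
    have : ⟪n, ψ⟫ / σ ≤ 1 := by
      rw [div_le_iff₀ hσpos]; linarith
    linarith
  · rw [div_lt_one hspos]; exact hρs
end
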